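/- arXiv:1202.5351 — 4 statements merged into one kernel-verified Lean document; each statement's English description precedes it below -/
import Mathlib

section
/- Let S_n be a binomial random variable with parameters n and p_n, and suppose there is a constant M with n·p_n ≤ M for all n. Then for every fixed natural number k there is a constant c > 0 (depending on k and M) such that P(S_n ≥ k) ≥ c·(n·p_n)^k for all sufficiently large n. -/
open Filter

/-- P(Binomial(n,p) ≥ k): the upper tail of the binomial distribution. -/
noncomputable def binomTail (n k : ℕ) (p : ℝ) : ℝ :=
  ∑ j ∈ Finset.Icc k n, (n.choose j : ℝ) * p ^ j * (1 - p) ^ (n - j)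

theorem stmt_8 (p : ℕ → ℝ) (hp : ∀ n, 0 ≤ p n ∧ p n ≤ 1)
    (M : ℝ) (hM : ∀ n : ℕ, (n : ℝ) * p n ≤ M) (k : ℕ) :
    ∃ c > 0, ∀ᶠ n : ℕ in atTop, c * ((n : ℝ) * p n) ^ k ≤ binomTail n k (p n) := by
  refine ⟨(1/2)^k / k.factorial * Real.exp (-(2*M)), by positivity, ?_⟩
  filter_upwards [eventually_ge_atTop (2*k), eventually_ge_atTop ⌈2*M⌉₊,
    eventually_ge_atTop 1] with n hn1 hn2 hn3
  set q := p n with hq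
  obtain ⟨hq0, hq1⟩ := hp n
  have hnq : (n:ℝ) * q ≤ M := hM n
  have hn0 : (1:ℝ) ≤ n := by exact_mod_cast hn3
  have h2M : 2*M ≤ (n:ℝ) := le_trans (Nat.le_ceil _) (by exact_mod_cast hn2)
  have hq2 : q ≤ 1/2 := by nlinarith
  -- exponential lower bound for 1 - q
  have h1 : (1:ℝ) + 2*q ≤ Real.exp (2*q) := by
    have := Real.add_one_le_exp (2*q); linarith
  have hmul : Real.exp (-(2*q)) * Real.exp (2*q) = 1 := by
    rw [← Real.exp_add]; simp
  have hexp : Real.exp (-(2*q)) ≤ 1 - q := by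
    nlinarith [Real.exp_pos (2*q), Real.exp_pos (-(2*q))]
  -- B : exp(-(2M)) ≤ (1-q)^(n-k)
  have hBn : Real.exp (-(2*M)) ≤ (1 - q)^n := by
    calc Real.exp (-(2*M)) ≤ Real.exp ((n:ℕ) * (-(2*q))) := by
          apply Real.exp_le_exp.mpr; push_cast; nlinarith
      _ = Real.exp (-(2*q)) ^ n := Real.exp_nat_mul _ n
      _ ≤ (1 - q)^n := by
          apply pow_le_pow_left₀ (Real.exp_pos _).le hexp
  have hB : Real.exp (-(2*M)) ≤ (1 - q)^(n - k) := by
    refine hBn.trans (pow_le_pow_of_le_one (by linarith) (by linarith) (Nat.sub_le n k))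
  -- A : (1/2)^k / k! * n^k ≤ choose n k
  have hkn : k ≤ n := le_trans (Nat.le_mul_of_pos_left k two_pos) hn1
  have hA : (1/2:ℝ)^k / k.factorial * (n:ℝ)^k ≤ (n.choose k : ℝ) := by
    have h2 : (n:ℝ) ≤ 2 * ((n + 1 - k : ℕ) : ℝ) := by
      have : n ≤ 2 * (n + 1 - k) := by omega
      exact_mod_cast this
    have h3 : ((n:ℝ))^k ≤ 2^k * ((n + 1 - k : ℕ) : ℝ)^k := by
      calc ((n:ℝ))^k ≤ (2 * ((n + 1 - k : ℕ) : ℝ))^k :=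
            pow_le_pow_left₀ (by positivity) h2 k
        _ = 2^k * ((n + 1 - k : ℕ) : ℝ)^k := mul_pow _ _ _
    have h4 : (((n + 1 - k : ℕ) : ℝ)) ^ k / k.factorial ≤ (n.choose k : ℝ) :=
      Nat.pow_le_choose k n
    have hfac : (0:ℝ) < k.factorial := by positivity
    rw [div_mul_eq_mul_div, div_le_iff₀ hfac]
    rw [div_le_iff₀ hfac] at h4
    have h5 : ((1/2:ℝ))^k * 2^k = 1 := by rw [← mul_pow]; norm_num
    calc (1/2:ℝ)^k * (n:ℝ)^k ≤ (1/2)^k * (2^k * ((n + 1 - k : ℕ):ℝ)^k) :=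
          mul_le_mul_of_nonneg_left h3 (by positivity)
      _ = ((n + 1 - k : ℕ):ℝ)^k := by rw [← mul_assoc, h5, one_mul]
      _ ≤ _ := h4
  -- single term ≤ sum
  have hterm : (n.choose k : ℝ) * q^k * (1-q)^(n-k) ≤ binomTail n k q := by
    unfold binomTail
    apply Finset.single_le_sum (f := fun j => (n.choose j : ℝ) * q ^ j * (1 - q) ^ (n - j))
    · intro j _
      have : (0:ℝ) ≤ 1 - q := by linarith
      positivity
    · simp [Finset.mem_Icc, hkn]
  calc (1/2)^k / k.factorial * Real.exp (-(2*M)) * ((n : ℝ) * q) ^ k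
      = ((1/2:ℝ)^k / k.factorial * (n:ℝ)^k * q^k) * Real.exp (-(2*M)) := by
        rw [mul_pow]; ring
    _ ≤ ((n.choose k : ℝ) * q^k) * (1-q)^(n-k) := by
        apply mul_le_mul _ hB (Real.exp_pos _).le (by positivity)
        exact mul_le_mul_of_nonneg_right hA (pow_nonneg hq0 k)
    _ ≤ binomTail n k q := hterm
end

section
/- For all λ, μ ≥ 0, the total variation distance between the Poisson distribution with mean λ and the Poisson distribution with mean μ is at most |λ - μ|. -/
/-!
If `l ≤ m`, then `e^{-(m - l)} P_l ≤ P_m` pointwise, so the two laws share a common part of mass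
at least `e^{-(m - l)}`, and the total variation distance is at most `1 - e^{-(m - l)} ≤ m - l`.
-/

open Real

/-- The Poisson probability mass function with mean `l`, at `j`. -/
noncomputable def poissonPMF (l : ℝ) (j : ℕ) : ℝ :=
  Real.exp (-l) * l ^ j / (Nat.factorial j)

theorem half_tsum_abs_sub_le_one_sub_of_mul_le {ι : Type*} {p q : ι → ℝ} {c : ℝ}
    (hp : HasSum p 1) (hq : HasSum q 1) (hp0 : ∀ i, 0 ≤ p i) (hcpq : ∀ i, c * p i ≤ q i) :
    (1 / 2) * ∑' i, |p i - q i| ≤ 1 - c := by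
  have hc1 : c ≤ 1 := by simpa using hasSum_le hcpq (hp.mul_left c) hq
  have hbound : ∀ i, |p i - q i| ≤ p i + q i - 2 * c * p i := fun i => by
    rw [abs_sub_le_iff]
    constructor <;> nlinarith [hp0 i, hcpq i]
  have hsum : HasSum (fun i => p i + q i - 2 * c * p i) (1 + 1 - 2 * c * 1) :=
    (hp.add hq).sub (hp.mul_left (2 * c))
  have habs : Summable fun i => |p i - q i| :=
    hsum.summable.of_nonneg_of_le (fun _ => abs_nonneg _) hbound
  calc (1 / 2) * ∑' i, |p i - q i| ≤ (1 / 2) * ∑' i, (p i + q i - 2 * c * p i) :=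
        mul_le_mul_of_nonneg_left (habs.tsum_le_tsum hbound hsum.summable) (by norm_num)
    _ = 1 - c := by rw [hsum.tsum_eq]; ring

theorem poissonPMF_nonneg {l : ℝ} (hl : 0 ≤ l) (j : ℕ) : 0 ≤ poissonPMF l j := by
  unfold poissonPMF
  positivity

theorem hasSum_poissonPMF {l : ℝ} (hl : 0 ≤ l) : HasSum (poissonPMF l) 1 :=
  ProbabilityTheory.hasSum_one_poissonMeasure ⟨l, hl⟩

theorem exp_neg_sub_mul_poissonPMF_le {l m : ℝ} (hl : 0 ≤ l) (hlm : l ≤ m) (j : ℕ) :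
    exp (-(m - l)) * poissonPMF l j ≤ poissonPMF m j := by
  have hexp : exp (-(m - l)) * exp (-l) = exp (-m) := by rw [← exp_add]; ring_nf
  calc exp (-(m - l)) * poissonPMF l j = exp (-m) * l ^ j / j.factorial := by
        rw [poissonPMF, ← hexp]; ring
    _ ≤ exp (-m) * m ^ j / j.factorial := by gcongr

theorem half_tsum_abs_sub_poissonPMF_le_of_le {l m : ℝ} (hl : 0 ≤ l) (hlm : l ≤ m) :
    (1 / 2) * ∑' j : ℕ, |poissonPMF l j - poissonPMF m j| ≤ m - l := by
  have hm : 0 ≤ m := hl.trans hlm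
  calc (1 / 2) * ∑' j : ℕ, |poissonPMF l j - poissonPMF m j| ≤ 1 - exp (-(m - l)) :=
        half_tsum_abs_sub_le_one_sub_of_mul_le (hasSum_poissonPMF hl) (hasSum_poissonPMF hm)
          (poissonPMF_nonneg hl) (exp_neg_sub_mul_poissonPMF_le hl hlm)
    _ ≤ m - l := by linarith [add_one_le_exp (-(m - l))]

theorem stmt_9 (l m : ℝ) (hl : 0 ≤ l) (hm : 0 ≤ m) :
    (1 / 2) * ∑' j : ℕ, |poissonPMF l j - poissonPMF m j| ≤ |l - m| := by
  rcases le_total l m with hlm | hml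
  · rw [abs_of_nonpos (sub_nonpos.mpr hlm), neg_sub]
    exact half_tsum_abs_sub_poissonPMF_le_of_le hl hlm
  · simp_rw [abs_sub_comm (poissonPMF l _), abs_of_nonneg (sub_nonneg.mpr hml)]
    exact half_tsum_abs_sub_poissonPMF_le_of_le hm hml
end

section
/- Let k ≥ 2 be an integer, a > 0, and p_n = a·n^{-1-1/k}. Let q_n = P(Binomial(n, p_n) ≥ k) be the probability that a fixed line of n vertices contains at least k open points. Then the probability that none of n independent such lines contains k open points satisfies (1 - q_n)^n → e^{-a^k/k!} as n → ∞. -/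
/-!
Sandwich `n * q_n` between `n` times the `j = k` term of the tail, `n C(n,k) p^k (1-p)^(n-k)`,
and the bound `n (np)^k / k! * exp (np)` obtained from `C(n,j) ≤ n^j / j!`. Since
`n^(k+1) p_n^k = a^k` and `n p_n → 0`, both tend to `a^k / k!`, and then
`(1 - q_n)^n → exp (-a^k / k!)`.
-/

open Filter

open Topology Asymptotics Nat

lemma sum_Icc_pow_div_factorial_le_mul_exp {x : ℝ} (hx : 0 ≤ x) (k n : ℕ) :
    ∑ j ∈ Finset.Icc k n, x ^ j / j ! ≤ x ^ k / k ! * Real.exp x := by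
  have hterm : ∀ j ∈ Finset.Icc k n, x ^ j / j ! ≤ x ^ k / k ! * (x ^ (j - k) / (j - k)!) := by
    intro j hj
    have hkj := (Finset.mem_Icc.mp hj).1
    have hfact : (k ! * (j - k)! : ℝ) ≤ j ! := by
      exact_mod_cast Nat.le_of_dvd j.factorial_pos (factorial_mul_factorial_dvd_factorial hkj)
    calc x ^ j / j ! ≤ x ^ k * x ^ (j - k) / (k ! * (j - k)!) := by
          rw [← pow_add, Nat.add_sub_cancel' hkj]
          gcongr
      _ = x ^ k / k ! * (x ^ (j - k) / (j - k)!) := by ring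
  have hshift : ∑ j ∈ Finset.Icc k n, x ^ (j - k) / (j - k)! =
      ∑ i ∈ Finset.range (n + 1 - k), x ^ i / i ! := by
    rw [← Finset.Ico_add_one_right_eq_Icc, Finset.sum_Ico_eq_sum_range]
    simp
  calc ∑ j ∈ Finset.Icc k n, x ^ j / j !
      ≤ ∑ j ∈ Finset.Icc k n, x ^ k / k ! * (x ^ (j - k) / (j - k)!) := Finset.sum_le_sum hterm
    _ = x ^ k / k ! * ∑ i ∈ Finset.range (n + 1 - k), x ^ i / i ! := by
        rw [← Finset.mul_sum, hshift]
    _ ≤ x ^ k / k ! * Real.exp x := by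
        gcongr
        exact Real.sum_le_exp_of_nonneg hx _

section binomTail

variable {n k : ℕ} {p : ℝ}

lemma choose_mul_pow_mul_one_sub_pow_le {j : ℕ} (hp0 : 0 ≤ p) (hp1 : p ≤ 1) :
    (n.choose j : ℝ) * p ^ j * (1 - p) ^ (n - j) ≤ (n * p) ^ j / j ! :=
  calc (n.choose j : ℝ) * p ^ j * (1 - p) ^ (n - j)
      ≤ (n ^ j / j !) * p ^ j * 1 := by
        have h1p : 0 ≤ 1 - p := by linarith
        gcongr
        · exact choose_le_pow_div j n
        · exact pow_le_one₀ h1p (by linarith)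
    _ = (n * p) ^ j / j ! := by ring

lemma choose_mul_pow_mul_one_sub_pow_le_binomTail (hkn : k ≤ n) (hp0 : 0 ≤ p) (hp1 : p ≤ 1) :
    (n.choose k : ℝ) * p ^ k * (1 - p) ^ (n - k) ≤ binomTail n k p :=
  Finset.single_le_sum (f := fun j => (n.choose j : ℝ) * p ^ j * (1 - p) ^ (n - j))
    (fun j _ => by have := sub_nonneg.2 hp1; positivity) (Finset.mem_Icc.mpr ⟨le_rfl, hkn⟩)

lemma binomTail_le_pow_div_factorial_mul_exp (hp0 : 0 ≤ p) (hp1 : p ≤ 1) :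
    binomTail n k p ≤ (n * p) ^ k / k ! * Real.exp (n * p) :=
  (Finset.sum_le_sum fun _ _ => choose_mul_pow_mul_one_sub_pow_le hp0 hp1).trans
    (sum_Icc_pow_div_factorial_le_mul_exp (by positivity) k n)

end binomTail

section Asymptotics

variable {p : ℕ → ℝ}

lemma tendsto_one_sub_pow_sub_of_tendsto_mul (k : ℕ) (hp : ∀ n, 0 ≤ p n)
    (hnp : Tendsto (fun n => n * p n) atTop (𝓝 0)) :
    Tendsto (fun n => (1 - p n) ^ (n - k)) atTop (𝓝 1) := by
  have hpow : Tendsto (fun n => (1 - p n) ^ n) atTop (𝓝 1) := by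
    have := Real.tendsto_one_add_pow_exp_of_tendsto (g := fun n => -p n) (by simpa using hnp.neg)
    simpa [sub_eq_add_neg] using this
  have hp1 := (ProbabilityTheory.tendsto_zero_of_tendsto_mul_atTop hnp).eventually
    (eventually_le_nhds zero_lt_one)
  refine tendsto_of_tendsto_of_tendsto_of_le_of_le' hpow tendsto_const_nhds ?_ ?_
  · filter_upwards [hp1] with n hn
    exact pow_le_pow_of_le_one (by linarith [hp n]) (by linarith [hp n]) (Nat.sub_le n k)
  · filter_upwards [hp1] with n hn
    exact pow_le_one₀ (by linarith [hp n]) (by linarith [hp n])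

theorem tendsto_nat_mul_binomTail {k : ℕ} {L : ℝ} (hp : ∀ n, 0 ≤ p n)
    (hnp : Tendsto (fun n => n * p n) atTop (𝓝 0))
    (hL : Tendsto (fun n : ℕ => (n : ℝ) ^ (k + 1) * p n ^ k) atTop (𝓝 L)) :
    Tendsto (fun n => n * binomTail n k (p n)) atTop (𝓝 (L / k !)) := by
  have hp1 := (ProbabilityTheory.tendsto_zero_of_tendsto_mul_atTop hnp).eventually
    (eventually_le_nhds zero_lt_one)
  have hlower : Tendsto (fun n => n * ((n.choose k : ℝ) * p n ^ k * (1 - p n) ^ (n - k)))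
      atTop (𝓝 (L / k !)) := by
    have hequiv := (isEquivalent_choose k).mul
      (IsEquivalent.refl (u := fun n => n * p n ^ k * (1 - p n) ^ (n - k)))
    refine (hequiv.tendsto_nhds_iff.mpr ?_).congr fun n => by simp only [Pi.mul_apply]; ring
    simpa using ((hL.mul (tendsto_one_sub_pow_sub_of_tendsto_mul k hp hnp)).div_const
      (k ! : ℝ)).congr fun n => by simp only [Pi.mul_apply]; ring
  have hupper : Tendsto (fun n => n * ((n * p n) ^ k / k ! * Real.exp (n * p n)))
      atTop (𝓝 (L / k !)) := by
    simpa using ((hL.div_const (k ! : ℝ)).mul ((Real.continuous_exp.tendsto 0).comp hnp)).congr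
      fun n => by simp only [Function.comp]; ring
  refine tendsto_of_tendsto_of_tendsto_of_le_of_le' hlower hupper ?_ ?_
  · filter_upwards [hp1, eventually_ge_atTop k] with n hn hkn
    exact mul_le_mul_of_nonneg_left
      (choose_mul_pow_mul_one_sub_pow_le_binomTail hkn (hp n) hn) n.cast_nonneg
  · filter_upwards [hp1] with n hn
    exact mul_le_mul_of_nonneg_left (binomTail_le_pow_div_factorial_mul_exp (hp n) hn)
      n.cast_nonneg

end Asymptotics

lemma mul_rpow_neg_one_sub {x : ℝ} (hx : 0 < x) (s : ℝ) : x * x ^ (-1 - s) = x ^ (-s) :=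
  calc x * x ^ (-1 - s) = x ^ (1 + (-1 - s)) := by rw [Real.rpow_add hx, Real.rpow_one]
    _ = x ^ (-s) := by ring_nf

lemma pow_succ_mul_rpow_neg_one_sub_inv_pow {x : ℝ} (hx : 0 < x) {k : ℕ} (hk : k ≠ 0) :
    x ^ (k + 1) * (x ^ (-1 - 1 / (k : ℝ))) ^ k = 1 := by
  have hk' : (k : ℝ) ≠ 0 := by exact_mod_cast hk
  rw [← Real.rpow_mul_natCast hx.le, ← Real.rpow_natCast, ← Real.rpow_add hx]
  field_simp
  push_cast
  ring_nf
  exact Real.rpow_zero x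

theorem stmt_12 (k : ℕ) (hk : 2 ≤ k) (a : ℝ) (ha : 0 < a)
    (p : ℕ → ℝ) (hp : ∀ n, p n = a * (n : ℝ) ^ (-1 - 1 / (k : ℝ) : ℝ)) :
    Tendsto (fun n => (1 - binomTail n k (p n)) ^ n) atTop
      (nhds (Real.exp (-(a ^ k / (Nat.factorial k : ℝ))))) := by
  have hp0 (n : ℕ) : 0 ≤ p n := by rw [hp]; positivity
  have hnp : Tendsto (fun n => n * p n) atTop (𝓝 0) := by
    have hk0 : (0 : ℝ) < 1 / k := by positivity
    have := ((tendsto_rpow_neg_atTop hk0).comp tendsto_natCast_atTop_atTop).const_mul a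
    rw [mul_zero] at this
    refine this.congr' ?_
    filter_upwards [eventually_gt_atTop 0] with n hn
    rw [hp, Function.comp_apply, mul_left_comm, mul_rpow_neg_one_sub (by positivity)]
  have hL : Tendsto (fun n : ℕ => (n : ℝ) ^ (k + 1) * p n ^ k) atTop (𝓝 (a ^ k)) := by
    refine tendsto_const_nhds.congr' ?_
    filter_upwards [eventually_gt_atTop 0] with n hn
    rw [hp, mul_pow, mul_left_comm,
      pow_succ_mul_rpow_neg_one_sub_inv_pow (by positivity) (by omega), mul_one]
  simpa only [sub_eq_add_neg] using Real.tendsto_one_add_pow_exp_of_tendsto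
    (g := fun n => -binomTail n k (p n))
    (by simpa only [mul_neg] using (tendsto_nat_mul_binomTail hp0 hnp hL).neg)
end

section
/- Let θ = 2k-1 be odd with k ≥ 2, let α > 1 + 1/k, set a = ⌊α/(α-1)⌋ and β(α) = α·k² + a(a+1) - α·a(a-1) - (k+1)². Fix d ≥ 3 real parameter δ = d - 2.1 > 0 and suppose α = 1 + 2/θ + √(8δ)/θ^{3/2}. Then β(α) ≤ δ + 3/(2θ) + (√(8δ)/4)·(2θ^{-1/2} + 3θ^{-3/2}). -/
/-!
Writing `x = α - 1`, the `a`-terms of β equal `2a - x a(a - 1)`, which is at most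
`1/x + 1 + x/2` for every real `a` by completing the square. With `θ = u²` and `δ = s²/8`
one has `x = (2u + s)/u³`, and `u³/(2u + s) ≤ u²/2 - su/4 + δ` (the difference is `sδ/(2u + s)`);
the resulting majorant of β is exactly the claimed bound.
-/

open Real

lemma mul_add_one_sub_mul_mul_sub_one_le {α : ℝ} (hα : 1 < α) (a : ℝ) :
    a * (a + 1) - α * a * (a - 1) ≤ 1 / (α - 1) + 1 + (α - 1) / 2 := by
  have hx : 0 < α - 1 := sub_pos.mpr hα
  rw [← sub_nonneg]
  -- times `x = α - 1`, the gap is `(x a - 1 - x / 2)² + x² / 4`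
  have key : (1 / (α - 1) + 1 + (α - 1) / 2 - (a * (a + 1) - α * a * (a - 1))) * (α - 1)
      = ((α - 1) * a - 1 - (α - 1) / 2) ^ 2 + (α - 1) ^ 2 / 4 := by
    field_simp
    ring
  exact nonneg_of_mul_nonneg_left (key ▸ by positivity) hx

lemma pow_three_div_two_mul_add_le {u s : ℝ} (hu : 0 < u) (hs : 0 ≤ s) :
    u ^ 3 / (2 * u + s) ≤ u ^ 2 / 2 - s * u / 4 + s ^ 2 / 8 := by
  rw [div_le_iff₀ (by positivity)]
  nlinarith [pow_nonneg hs 3]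

lemma sq_rpow_three_halves {u : ℝ} (hu : 0 ≤ u) : (u ^ 2) ^ ((3 : ℝ) / 2) = u ^ 3 := by
  rw [← rpow_natCast, ← rpow_mul hu]; norm_num

lemma sq_rpow_neg_one_half {u : ℝ} (hu : 0 ≤ u) : (u ^ 2) ^ (-(1 : ℝ) / 2) = u⁻¹ := by
  rw [← rpow_natCast, ← rpow_mul hu]; norm_num [rpow_neg_one]

lemma sq_rpow_neg_three_halves {u : ℝ} (hu : 0 ≤ u) : (u ^ 2) ^ (-(3 : ℝ) / 2) = (u ^ 3)⁻¹ := by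
  rw [neg_div, rpow_neg (sq_nonneg u), sq_rpow_three_halves hu]

-- `θ = u²`, `δ = s² / 8`, and the `a`-terms of β are replaced by their majorant
lemma beta_majorant_le {u s α k : ℝ} (hu : 0 < u) (hs : 0 ≤ s)
    (hα : α = 1 + 2 / u ^ 2 + s / u ^ 3) (hk : k = (u ^ 2 + 1) / 2) :
    α * k ^ 2 + (1 / (α - 1) + 1 + (α - 1) / 2) - (k + 1) ^ 2
      ≤ s ^ 2 / 8 + 3 / (2 * u ^ 2) + s / 4 * (2 * u⁻¹ + 3 * (u ^ 3)⁻¹) := by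
  have hα_sub : α - 1 = (2 * u + s) / u ^ 3 := by
    rw [hα]; field_simp; ring
  have hinv := pow_three_div_two_mul_add_le hu hs
  rw [hα_sub, one_div_div]
  have : α * k ^ 2 + (u ^ 2 / 2 - s * u / 4 + s ^ 2 / 8 + 1 + (2 * u + s) / u ^ 3 / 2) - (k + 1) ^ 2
      = s ^ 2 / 8 + 3 / (2 * u ^ 2) + s / 4 * (2 * u⁻¹ + 3 * (u ^ 3)⁻¹) := by
    rw [hα, hk]; field_simp; ring
  linarith

theorem stmt_15_general (k : ℕ) (hk : 2 ≤ k) (θ : ℝ) (hθ : θ = 2 * (k : ℝ) - 1)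
    (δ : ℝ) (hδ : 0 < δ) (α : ℝ)
    (hα : α = 1 + 2 / θ + Real.sqrt (8 * δ) / θ ^ ((3 : ℝ) / 2))
    (a : ℤ) :
    α * (k : ℝ) ^ 2 + (a : ℝ) * (a + 1) - α * a * (a - 1) - ((k : ℝ) + 1) ^ 2
      ≤ δ + 3 / (2 * θ) +
        (Real.sqrt (8 * δ) / 4) * (2 * θ ^ (-(1 : ℝ) / 2) + 3 * θ ^ (-(3 : ℝ) / 2)) := by
  have hθ_pos : 0 < θ := by
    have : (2 : ℝ) ≤ k := by exact_mod_cast hk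
    linarith
  obtain ⟨u, hu, rfl⟩ : ∃ u, 0 < u ∧ θ = u ^ 2 :=
    ⟨√θ, sqrt_pos.mpr hθ_pos, (sq_sqrt hθ_pos.le).symm⟩
  have hδ_sq : √(8 * δ) ^ 2 / 8 = δ := by rw [sq_sqrt (by positivity)]; ring
  rw [sq_rpow_three_halves hu.le] at hα
  have hα_gt : 1 < α := by
    have : 0 < 2 / u ^ 2 + √(8 * δ) / u ^ 3 := by positivity
    linarith
  calc _ ≤ α * (k : ℝ) ^ 2 + (1 / (α - 1) + 1 + (α - 1) / 2) - ((k : ℝ) + 1) ^ 2 := by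
        linarith [mul_add_one_sub_mul_mul_sub_one_le hα_gt a]
    _ ≤ _ := beta_majorant_le hu (sqrt_nonneg _) hα (by rw [hθ]; ring)
    _ = _ := by rw [sq_rpow_neg_one_half hu.le, sq_rpow_neg_three_halves hu.le, hδ_sq]

theorem stmt_15 (k : ℕ) (hk : 2 ≤ k) (θ : ℝ) (hθ : θ = 2 * (k : ℝ) - 1)
    (δ : ℝ) (hδ : 0 < δ) (α : ℝ) (hα1 : 1 + 1 / (k : ℝ) < α)
    (hα : α = 1 + 2 / θ + Real.sqrt (8 * δ) / θ ^ ((3 : ℝ) / 2))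
    (a : ℤ) (ha : a = ⌊α / (α - 1)⌋) :
    α * (k : ℝ) ^ 2 + (a : ℝ) * (a + 1) - α * a * (a - 1) - ((k : ℝ) + 1) ^ 2
      ≤ δ + 3 / (2 * θ) +
        (Real.sqrt (8 * δ) / 4) * (2 * θ ^ (-(1 : ℝ) / 2) + 3 * θ ^ (-(3 : ℝ) / 2)) :=
  stmt_15_general k hk θ hθ δ hδ α hα a
end
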